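/- Let p, q be distinct primes and let M = sift({p, q, pq}). Then the sets M, pM, qM, pqM are pairwise disjoint with union all of ℕ+, and M has natural density 1/(1 + 1/p + 1/q + 1/(pq)). -/

import Mathlib

/-- Membership in the selective sifting of `S`: `0 < n`, and `n` cannot be written as
`n = a·b` with `a ∈ S` and `b` itself in the selective sifting (necessarily `b < n`). -/
def siftMem (S : Set ℕ) : ℕ → Prop := fun n =>
  Nat.strongRecOn n (fun n ih =>
    0 < n ∧ ¬ ∃ a ∈ S, ∃ b, ∃ hb : b < n, ih b hb ∧ n = a * b)

/-- The selective sifting `sift S ⊆ ℕ+`. -/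
def sift (S : Set ℕ) : Set ℕ := {n | siftMem S n}

/-- `S ⊆ ℕ+` has natural (asymptotic) density `c`:
`#{s ∈ S : 1 ≤ s ≤ N} / N → c` as `N → ∞`. -/
def hasDensity (S : Set ℕ) (c : ℝ) : Prop :=
  Filter.Tendsto (fun N : ℕ => ((S ∩ Set.Icc 1 N).ncard : ℝ) / N)
    Filter.atTop (nhds c)

lemma siftMem_iff (S : Set ℕ) (n : ℕ) :
    siftMem S n ↔ 0 < n ∧ ¬ ∃ a ∈ S, ∃ b, b < n ∧ siftMem S b ∧ n = a * b := by
  unfold siftMem Nat.strongRecOn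
  rw [WellFounded.fix_eq]
  simp only [exists_prop]

lemma fact_mul_apply {a b : ℕ} (ha : a ≠ 0) (hb : b ≠ 0) (r : ℕ) :
    (a * b).factorization r = a.factorization r + b.factorization r := by
  rw [Nat.factorization_mul ha hb]; rfl

section
variable {p q : ℕ} (hp : p.Prime) (hq : q.Prime) (hpq : p ≠ q)

include hp hq hpq in
lemma sift_char (n : ℕ) :
    siftMem {p, q, p * q} n ↔
      0 < n ∧ Even (n.factorization p) ∧ Even (n.factorization q) := by
  induction n using Nat.strong_induction_on with
  | _ n IH =>
  have hp1 : 1 < p := hp.one_lt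
  have hq1 : 1 < q := hq.one_lt
  have hp0 : p ≠ 0 := hp.ne_zero
  have hq0 : q ≠ 0 := hq.ne_zero
  have hfp : p.factorization p = 1 := hp.factorization_self
  have hfq : q.factorization q = 1 := hq.factorization_self
  have hfpq : p.factorization q = 0 := by
    rw [hp.factorization, Finsupp.single_apply, if_neg hpq]
  have hfqp : q.factorization p = 0 := by
    rw [hq.factorization, Finsupp.single_apply, if_neg hpq.symm]
  rw [siftMem_iff]
  constructor
  · rintro ⟨hn, hno⟩
    refine ⟨hn, ?_⟩
    have key : ∀ a ∈ ({p, q, p * q} : Set ℕ), ∀ b, n = a * b →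
        Even (b.factorization p) → Even (b.factorization q) → False := by
      intro a ha b hab hep heq
      have ha1 : 1 < a := by
        rcases ha with rfl | rfl | rfl
        · exact hp1
        · exact hq1
        · exact one_lt_mul'' hp1 hq1
      have hb0 : 0 < b := by
        rcases Nat.eq_zero_or_pos b with rfl | h
        · simp [hab] at hn
        · exact h
      have hbn : b < n := by
        rw [hab]; exact lt_mul_of_one_lt_left hb0 ha1
      exact hno ⟨a, ha, b, hbn, (IH b hbn).mpr ⟨hb0, hep, heq⟩, hab⟩
    have hpd : Odd (n.factorization p) → p ∣ n := fun h => by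
      simpa using (hp.pow_dvd_iff_le_factorization hn.ne').mpr h.pos
    have hqd : Odd (n.factorization q) → q ∣ n := fun h => by
      simpa using (hq.pow_dvd_iff_le_factorization hn.ne').mpr h.pos
    rcases Nat.even_or_odd (n.factorization p) with h1 | h1 <;>
      rcases Nat.even_or_odd (n.factorization q) with h2 | h2
    · exact ⟨h1, h2⟩
    · -- p even, q odd : divide by q
      obtain ⟨b, hab⟩ := hqd h2
      have hb0 : b ≠ 0 := by rintro rfl; simp [hab] at hn
      rw [hab, fact_mul_apply hq0 hb0, hfqp, zero_add] at h1
      rw [hab, fact_mul_apply hq0 hb0, hfq, add_comm, Nat.odd_add_one, Nat.not_odd_iff_even] at h2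
      exact absurd (key q (by simp) b hab h1 h2) not_false
    · -- p odd, q even : divide by p
      obtain ⟨b, hab⟩ := hpd h1
      have hb0 : b ≠ 0 := by rintro rfl; simp [hab] at hn
      rw [hab, fact_mul_apply hp0 hb0, hfp, add_comm, Nat.odd_add_one, Nat.not_odd_iff_even] at h1
      rw [hab, fact_mul_apply hp0 hb0, hfpq, zero_add] at h2
      exact absurd (key p (by simp) b hab h1 h2) not_false
    · -- both odd : divide by p*q
      obtain ⟨b, hab⟩ := (Nat.Coprime.mul_dvd_of_dvd_of_dvd
        ((Nat.coprime_primes hp hq).mpr hpq) (hpd h1) (hqd h2))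
      have hb0 : b ≠ 0 := by rintro rfl; simp [hab] at hn
      have hpq0 : p * q ≠ 0 := by positivity
      rw [hab, fact_mul_apply hpq0 hb0, fact_mul_apply hp0 hq0, hfp, hfqp,
        add_zero, add_comm, Nat.odd_add_one, Nat.not_odd_iff_even] at h1
      rw [hab, fact_mul_apply hpq0 hb0, fact_mul_apply hp0 hq0, hfq, hfpq,
        zero_add, add_comm, Nat.odd_add_one, Nat.not_odd_iff_even] at h2
      exact absurd (key (p * q) (by simp) b hab h1 h2) not_false
  · rintro ⟨hn, hep, heq⟩
    refine ⟨hn, ?_⟩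
    rintro ⟨a, ha, b, hbn, hsb, hab⟩
    obtain ⟨hb0, hbp, hbq⟩ := (IH b hbn).mp hsb
    rcases ha with ha | ha | ha <;> rw [ha] at hab
    · rw [hab, fact_mul_apply hp0 hb0.ne' p, hfp, add_comm, Nat.even_add_one] at hep
      exact hep hbp
    · rw [hab, fact_mul_apply hq0 hb0.ne' q, hfq, add_comm, Nat.even_add_one] at heq
      exact heq hbq
    · rw [hab, fact_mul_apply (by positivity) hb0.ne' p, fact_mul_apply hp0 hq0 p,
        hfp, hfqp, add_zero, add_comm, Nat.even_add_one] at hep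
      exact hep hbp
end

open Finset

lemma alt_ind {p : ℕ} (hp : p.Prime) {n : ℕ} (hn : n ≠ 0) {K : ℕ}
    (hK : n.factorization p ≤ K) :
    ∑ k ∈ range (K + 1), ((-1 : ℝ) ^ k * if p ^ k ∣ n then 1 else 0) =
      if Even (n.factorization p) then 1 else 0 := by
  set v := n.factorization p with hv
  have h1 : ∀ k ∈ range (K + 1), ((-1 : ℝ) ^ k * if p ^ k ∣ n then 1 else 0)
      = if k ≤ v then (-1 : ℝ) ^ k else 0 := by
    intro k _
    by_cases h : k ≤ v
    · rw [if_pos h, if_pos ((hp.pow_dvd_iff_le_factorization hn).mpr h), mul_one]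
    · rw [if_neg h, if_neg (fun hd => h ((hp.pow_dvd_iff_le_factorization hn).mp hd)),
        mul_zero]
  rw [Finset.sum_congr rfl h1, ← Finset.sum_filter]
  have h2 : (range (K + 1)).filter (· ≤ v) = range (v + 1) := by
    ext k; simp only [mem_filter, mem_range]; omega
  rw [h2, neg_one_geom_sum]
  rcases Nat.even_or_odd v with h | h
  · rw [if_neg (by simpa [Nat.even_add_one] using h), if_pos h]
  · rw [if_pos (by simpa [Nat.even_add_one, Nat.not_even_iff_odd] using h),
      if_neg (by rwa [Nat.not_even_iff_odd])]

lemma sum_dvd_ind (N d : ℕ) :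
    ∑ n ∈ Finset.Icc 1 N, (if d ∣ n then (1 : ℝ) else 0) = ((N / d : ℕ) : ℝ) := by
  rw [Finset.sum_boole]
  have : Finset.Icc 1 N = Finset.Ioc 0 N := by ext k; simp; omega
  rw [this, Nat.Ioc_filter_dvd_card_eq_div]

lemma count_eq {p q : ℕ} (hp : p.Prime) (hq : q.Prime) (hpq : p ≠ q) (N : ℕ) :
    ((((Finset.Icc 1 N).filter
        (fun n => Even (n.factorization p) ∧ Even (n.factorization q))).card : ℕ) : ℝ)
    = ∑ k ∈ range (Nat.log p N + 1), ∑ l ∈ range (Nat.log q N + 1),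
        ((-1 : ℝ) ^ (k + l) * ((N / (p ^ k * q ^ l) : ℕ) : ℝ)) := by
  rw [← Finset.sum_boole]
  have step : ∀ n ∈ Finset.Icc 1 N,
      (if Even (n.factorization p) ∧ Even (n.factorization q) then (1 : ℝ) else 0)
      = ∑ k ∈ range (Nat.log p N + 1), ∑ l ∈ range (Nat.log q N + 1),
          ((-1 : ℝ) ^ (k + l) * if p ^ k * q ^ l ∣ n then 1 else 0) := by
    intro n hn
    rw [Finset.mem_Icc] at hn
    have hn0 : n ≠ 0 := by omega
    have hvp : n.factorization p ≤ Nat.log p N :=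
      (Nat.le_log_iff_pow_le hp.one_lt (by omega)).mpr
        (le_trans (Nat.ordProj_le p hn0) hn.2)
    have hvq : n.factorization q ≤ Nat.log q N :=
      (Nat.le_log_iff_pow_le hq.one_lt (by omega)).mpr
        (le_trans (Nat.ordProj_le q hn0) hn.2)
    have e1 : (if Even (n.factorization p) ∧ Even (n.factorization q) then (1 : ℝ) else 0)
        = (if Even (n.factorization p) then (1:ℝ) else 0)
          * (if Even (n.factorization q) then (1:ℝ) else 0) := by
      split_ifs with h1 h2 h3 <;> simp_all
    rw [e1, ← alt_ind hp hn0 hvp, ← alt_ind hq hn0 hvq, Finset.sum_mul_sum]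
    refine Finset.sum_congr rfl fun k _ => Finset.sum_congr rfl fun l _ => ?_
    have hcop : Nat.Coprime (p ^ k) (q ^ l) :=
      ((Nat.coprime_primes hp hq).mpr hpq).pow k l
    have hdd : p ^ k * q ^ l ∣ n ↔ p ^ k ∣ n ∧ q ^ l ∣ n := by
      constructor
      · exact fun h => ⟨dvd_trans (dvd_mul_right _ _) h, dvd_trans (dvd_mul_left _ _) h⟩
      · exact fun h => hcop.mul_dvd_of_dvd_of_dvd h.1 h.2
    rw [pow_add]
    rcases iff_iff_and_or_not_and_not.mp hdd with ⟨h1, h2⟩ | ⟨h1, h2⟩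
    · rw [if_pos h1, if_pos h2.1, if_pos h2.2]; ring
    · rw [if_neg h1]
      rcases Decidable.not_and_iff_or_not.mp h2 with h | h
      · rw [if_neg h]; ring
      · rw [if_neg h]; ring
  rw [Finset.sum_congr rfl step, Finset.sum_comm]
  refine Finset.sum_congr rfl fun k _ => ?_
  rw [Finset.sum_comm]
  refine Finset.sum_congr rfl fun l _ => ?_
  rw [← Finset.mul_sum, sum_dvd_ind]


lemma floor_div_err (N d : ℕ) (hd : 0 < d) :
    |((N / d : ℕ) : ℝ) - (N : ℝ) / d| ≤ 1 := by
  have hd0 : (0:ℝ) < (d:ℝ) := by exact_mod_cast hd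
  have h1 : ((N / d : ℕ) : ℝ) ≤ (N : ℝ) / d := Nat.cast_div_le
  have h2 : (N : ℝ) / d ≤ ((N / d : ℕ) : ℝ) + 1 := by
    rw [div_le_iff₀ hd0]
    have h3 : N < (N / d + 1) * d := by
      have := Nat.div_add_mod N d
      have := Nat.mod_lt N hd
      nlinarith
    calc (N:ℝ) ≤ ((N / d + 1) * d : ℕ) := by exact_mod_cast h3.le
    _ = (((N/d:ℕ):ℝ) + 1) * d := by push_cast; ring
  rw [abs_le]
  constructor <;> linarith

lemma count_stepA {p q : ℕ} (hp : p.Prime) (hq : q.Prime) (hpq : p ≠ q) (N : ℕ) :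
    |((((Finset.Icc 1 N).filter
        (fun n => Even (n.factorization p) ∧ Even (n.factorization q))).card : ℕ) : ℝ)
      - ∑ k ∈ Finset.range (Nat.log p N + 1), ∑ l ∈ Finset.range (Nat.log q N + 1),
          ((-1 : ℝ) ^ (k + l) * ((N : ℝ) / ((p : ℝ) ^ k * (q : ℝ) ^ l)))|
    ≤ ((Nat.log p N : ℝ) + 1) * ((Nat.log q N : ℝ) + 1) := by
  rw [count_eq hp hq hpq N]
  simp only [← Finset.sum_sub_distrib]
  refine le_trans (Finset.abs_sum_le_sum_abs _ _) ?_
  have hout : ∀ k ∈ Finset.range (Nat.log p N + 1),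
      |∑ l ∈ Finset.range (Nat.log q N + 1),
        ((-1 : ℝ) ^ (k + l) * ((N / (p ^ k * q ^ l) : ℕ) : ℝ)
          - (-1 : ℝ) ^ (k + l) * ((N : ℝ) / ((p : ℝ) ^ k * (q : ℝ) ^ l)))|
      ≤ (Nat.log q N : ℝ) + 1 := by
    intro k _
    refine le_trans (Finset.abs_sum_le_sum_abs _ _) ?_
    have hterm : ∀ l ∈ Finset.range (Nat.log q N + 1),
        |(-1 : ℝ) ^ (k + l) * ((N / (p ^ k * q ^ l) : ℕ) : ℝ)
          - (-1 : ℝ) ^ (k + l) * ((N : ℝ) / ((p : ℝ) ^ k * (q : ℝ) ^ l))| ≤ 1 := by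
      intro l _
      rw [← mul_sub, abs_mul, abs_pow, abs_neg, abs_one, one_pow, one_mul]
      have h := floor_div_err N (p ^ k * q ^ l)
        (Nat.mul_pos (pow_pos hp.pos k) (pow_pos hq.pos l))
      calc |((N / (p ^ k * q ^ l) : ℕ) : ℝ) - (N : ℝ) / ((p : ℝ) ^ k * (q : ℝ) ^ l)|
          = |((N / (p ^ k * q ^ l) : ℕ) : ℝ) - (N : ℝ) / ((p ^ k * q ^ l : ℕ) : ℝ)| := by
            push_cast; ring_nf
        _ ≤ 1 := h
    refine le_trans (Finset.sum_le_sum hterm) ?_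
    simp
  refine le_trans (Finset.sum_le_sum hout) ?_
  rw [Finset.sum_const, Finset.card_range, nsmul_eq_mul]
  push_cast
  nlinarith [Nat.cast_nonneg (α := ℝ) (Nat.log p N), Nat.cast_nonneg (α := ℝ) (Nat.log q N)]

lemma count_stepB {p q : ℕ} (hp : p.Prime) (hq : q.Prime) (N : ℕ) (hN : 1 ≤ N) :
    |(∑ k ∈ Finset.range (Nat.log p N + 1), ∑ l ∈ Finset.range (Nat.log q N + 1),
          ((-1 : ℝ) ^ (k + l) * ((N : ℝ) / ((p : ℝ) ^ k * (q : ℝ) ^ l))))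
      - (1 + (p : ℝ)⁻¹ + (q : ℝ)⁻¹ + ((p : ℝ) * q)⁻¹)⁻¹ * N| ≤ 3 := by
  have hp1 : (1:ℝ) < p := by exact_mod_cast hp.one_lt
  have hq1 : (1:ℝ) < q := by exact_mod_cast hq.one_lt
  have hp0 : (0:ℝ) < p := by linarith
  have hq0 : (0:ℝ) < q := by linarith
  have hN0 : (0:ℝ) < N := by exact_mod_cast hN
  set a : ℝ := (p:ℝ)⁻¹ with ha
  set b : ℝ := (q:ℝ)⁻¹ with hb
  have ha0 : 0 < a := by positivity
  have hb0 : 0 < b := by positivity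
  have ha1 : a ≤ 1 := by rw [ha, inv_le_one_iff₀]; right; linarith
  have hb1 : b ≤ 1 := by rw [hb, inv_le_one_iff₀]; right; linarith
  set K := Nat.log p N with hK
  set L := Nat.log q N with hL
  set e1 : ℝ := (-a) ^ (K + 1) with he1
  set e2 : ℝ := (-b) ^ (L + 1) with he2
  have hpow : (N:ℝ) ≤ (p:ℝ) ^ (K+1) := by
    have := Nat.lt_pow_succ_log_self hp.one_lt N
    exact_mod_cast this.le
  have hqow : (N:ℝ) ≤ (q:ℝ) ^ (L+1) := by
    have := Nat.lt_pow_succ_log_self hq.one_lt N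
    exact_mod_cast this.le
  have he1b : |e1| ≤ (N:ℝ)⁻¹ := by
    rw [he1, abs_pow, abs_neg, abs_of_pos ha0, ha, inv_pow,
      inv_le_inv₀ (by positivity) hN0]
    exact hpow
  have he2b : |e2| ≤ (N:ℝ)⁻¹ := by
    rw [he2, abs_pow, abs_neg, abs_of_pos hb0, hb, inv_pow,
      inv_le_inv₀ (by positivity) hN0]
    exact hqow
  have hN1 : (N:ℝ)⁻¹ ≤ 1 := by
    rw [inv_le_one_iff₀]; right; exact_mod_cast hN
  have hterm : ∀ k l : ℕ, (-1 : ℝ) ^ (k + l) * ((N : ℝ) / ((p : ℝ) ^ k * (q : ℝ) ^ l))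
      = (N:ℝ) * ((-a) ^ k * (-b) ^ l) := by
    intro k l
    rw [neg_pow a k, neg_pow b l, pow_add, ha, hb, inv_pow, inv_pow]
    field_simp
  have hsum : (∑ k ∈ Finset.range (K + 1), ∑ l ∈ Finset.range (L + 1),
        ((-1 : ℝ) ^ (k + l) * ((N : ℝ) / ((p : ℝ) ^ k * (q : ℝ) ^ l))))
      = (N:ℝ) * ((∑ k ∈ Finset.range (K + 1), (-a) ^ k)
          * (∑ l ∈ Finset.range (L + 1), (-b) ^ l)) := by
    rw [Finset.sum_mul_sum, Finset.mul_sum]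
    refine Finset.sum_congr rfl fun k _ => ?_
    rw [Finset.mul_sum]
    exact Finset.sum_congr rfl fun l _ => hterm k l
  have hane : (-a) - 1 ≠ 0 := by intro h; linarith
  have hbne : (-b) - 1 ≠ 0 := by intro h; linarith
  have h1a : (1:ℝ) + a ≠ 0 := by intro h; linarith
  have h1b : (1:ℝ) + b ≠ 0 := by intro h; linarith
  have hgp : (∑ k ∈ Finset.range (K + 1), (-a) ^ k) = (1 - e1) / (1 + a) := by
    rw [geom_sum_eq (ne_of_lt (by linarith : -a < 1)), ← he1,
      div_eq_div_iff hane h1a]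
    ring
  have hgq : (∑ l ∈ Finset.range (L + 1), (-b) ^ l) = (1 - e2) / (1 + b) := by
    rw [geom_sum_eq (ne_of_lt (by linarith : -b < 1)), ← he2,
      div_eq_div_iff hbne h1b]
    ring
  have hαab : (1 + (p : ℝ)⁻¹ + (q : ℝ)⁻¹ + ((p : ℝ) * q)⁻¹)⁻¹ = ((1+a)*(1+b))⁻¹ := by
    rw [mul_inv, ← ha, ← hb]
    congr 1
    ring
  rw [hsum, hgp, hgq, hαab]
  have hE : (N:ℝ) * ((1 - e1) / (1 + a) * ((1 - e2) / (1 + b)))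
      - ((1+a)*(1+b))⁻¹ * N = ((1+a)*(1+b))⁻¹ * ((N:ℝ) * (-(e1 + e2) + e1 * e2)) := by
    field_simp
    ring
  rw [hE, abs_mul, abs_mul]
  have h1 : |((1+a)*(1+b))⁻¹| ≤ 1 := by
    rw [abs_of_pos (by positivity), inv_le_one_iff₀]
    right; nlinarith
  have h2 : |(-(e1 + e2) + e1 * e2)| ≤ 3 * (N:ℝ)⁻¹ := by
    have hmul : |e1| * |e2| ≤ (N:ℝ)⁻¹ * 1 :=
      mul_le_mul he1b (le_trans he2b hN1) (abs_nonneg _) (by positivity)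
    calc |(-(e1 + e2) + e1 * e2)| ≤ |(-(e1+e2))| + |e1*e2| := abs_add_le _ _
      _ = |e1 + e2| + |e1| * |e2| := by rw [abs_neg, abs_mul]
      _ ≤ (|e1| + |e2|) + |e1| * |e2| := by have := abs_add_le e1 e2; linarith
      _ ≤ ((N:ℝ)⁻¹ + (N:ℝ)⁻¹) + (N:ℝ)⁻¹ * 1 := by
          have := abs_nonneg e1; have := abs_nonneg e2; linarith
      _ = 3 * (N:ℝ)⁻¹ := by ring
  calc |((1+a)*(1+b))⁻¹| * (|(N:ℝ)| * |(-(e1 + e2) + e1 * e2)|)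
      ≤ 1 * ((N:ℝ) * (3 * (N:ℝ)⁻¹)) := by
        apply mul_le_mul h1 _ (by positivity) zero_le_one
        rw [abs_of_pos hN0]
        exact mul_le_mul_of_nonneg_left h2 hN0.le
    _ = 3 := by field_simp

lemma count_est {p q : ℕ} (hp : p.Prime) (hq : q.Prime) (hpq : p ≠ q) (N : ℕ)
    (hN : 1 ≤ N) :
    |((((Finset.Icc 1 N).filter
        (fun n => Even (n.factorization p) ∧ Even (n.factorization q))).card : ℕ) : ℝ)
      - (1 + (p : ℝ)⁻¹ + (q : ℝ)⁻¹ + ((p : ℝ) * q)⁻¹)⁻¹ * N|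
    ≤ (((Nat.log 2 N : ℝ) + 1) ^ 2 + 3) := by
  have hKp : (Nat.log p N : ℝ) ≤ (Nat.log 2 N : ℝ) := by
    exact_mod_cast Nat.log_anti_left one_lt_two hp.two_le
  have hKq : (Nat.log q N : ℝ) ≤ (Nat.log 2 N : ℝ) := by
    exact_mod_cast Nat.log_anti_left one_lt_two hq.two_le
  have hA := count_stepA hp hq hpq N
  have hB := count_stepB hp hq N hN
  have htri := abs_sub_le
    ((((Finset.Icc 1 N).filter
        (fun n => Even (n.factorization p) ∧ Even (n.factorization q))).card : ℕ) : ℝ)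
    (∑ k ∈ Finset.range (Nat.log p N + 1), ∑ l ∈ Finset.range (Nat.log q N + 1),
        ((-1 : ℝ) ^ (k + l) * ((N : ℝ) / ((p : ℝ) ^ k * (q : ℝ) ^ l))))
    ((1 + (p : ℝ)⁻¹ + (q : ℝ)⁻¹ + ((p : ℝ) * q)⁻¹)⁻¹ * N)
  have hnn : (0:ℝ) ≤ (Nat.log p N : ℝ) := Nat.cast_nonneg _
  have hnn' : (0:ℝ) ≤ (Nat.log q N : ℝ) := Nat.cast_nonneg _
  have hnn2 : (0:ℝ) ≤ (Nat.log 2 N : ℝ) := Nat.cast_nonneg _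
  nlinarith [hA, hB, htri]

lemma log_tendsto : Filter.Tendsto (fun N : ℕ => Nat.log 2 N) Filter.atTop Filter.atTop := by
  apply Filter.tendsto_atTop.mpr
  intro b
  filter_upwards [Filter.eventually_ge_atTop (2 ^ b)] with N hNb
  have hN0 : N ≠ 0 := by
    have := Nat.one_le_two_pow (n := b); omega
  exact (Nat.le_log_iff_pow_le one_lt_two hN0).mpr hNb

lemma aux_tendsto : Filter.Tendsto (fun k : ℕ => (((k:ℝ) + 1) ^ 2 + 3) / 2 ^ k)
    Filter.atTop (nhds 0) := by
  have hr : ‖(2⁻¹ : ℝ)‖ < 1 := by rw [Real.norm_eq_abs]; rw [abs_of_pos] <;> norm_num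
  have t2 := (summable_pow_mul_geometric_of_norm_lt_one (R := ℝ) 2 hr).tendsto_atTop_zero
  have t1 := (summable_pow_mul_geometric_of_norm_lt_one (R := ℝ) 1 hr).tendsto_atTop_zero
  have t0 := (summable_pow_mul_geometric_of_norm_lt_one (R := ℝ) 0 hr).tendsto_atTop_zero
  have h := (t2.add (t1.const_mul 2)).add (t0.const_mul 4)
  norm_num at h
  refine h.congr fun k => ?_
  simp only [one_mul, div_eq_mul_inv, ← inv_pow]
  ring

lemma density_count {p q : ℕ} (hp : p.Prime) (hq : q.Prime) (hpq : p ≠ q) :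
    Filter.Tendsto (fun N : ℕ => ((((Finset.Icc 1 N).filter
        (fun n => Even (n.factorization p) ∧ Even (n.factorization q))).card : ℝ)) / N)
      Filter.atTop (nhds ((1 + (p : ℝ)⁻¹ + (q : ℝ)⁻¹ + ((p : ℝ) * q)⁻¹)⁻¹)) := by
  rw [← tendsto_sub_nhds_zero_iff]
  apply squeeze_zero_norm' (a := fun N : ℕ => (((Nat.log 2 N : ℝ) + 1) ^ 2 + 3) / N)
  · filter_upwards [Filter.eventually_ge_atTop 1] with N hN
    have hN0 : (0:ℝ) < N := by exact_mod_cast hN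
    have key := count_est hp hq hpq N hN
    rw [Real.norm_eq_abs]
    have heq : (((Finset.Icc 1 N).filter
        (fun n => Even (n.factorization p) ∧ Even (n.factorization q))).card : ℝ) / N
        - (1 + (p : ℝ)⁻¹ + (q : ℝ)⁻¹ + ((p : ℝ) * q)⁻¹)⁻¹
        = ((((Finset.Icc 1 N).filter
          (fun n => Even (n.factorization p) ∧ Even (n.factorization q))).card : ℝ)
          - (1 + (p : ℝ)⁻¹ + (q : ℝ)⁻¹ + ((p : ℝ) * q)⁻¹)⁻¹ * N) / N := by
      field_simp
    rw [heq, abs_div, abs_of_pos hN0]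
    exact div_le_div_of_nonneg_right key hN0.le
  · -- tendsto of the bound
    apply squeeze_zero
    · intro N; positivity
    · intro N
      show (((Nat.log 2 N : ℝ) + 1) ^ 2 + 3) / N
          ≤ (((Nat.log 2 N : ℝ) + 1) ^ 2 + 3) / 2 ^ (Nat.log 2 N)
      rcases Nat.eq_zero_or_pos N with rfl | hN
      · simp; positivity
      · apply div_le_div_of_nonneg_left (by positivity) (by positivity)
        have := Nat.pow_log_le_self 2 (Nat.pos_iff_ne_zero.mp hN)
        exact_mod_cast this
    · exact aux_tendsto.comp log_tendsto

section main
variable {p q : ℕ} (hp : p.Prime) (hq : q.Prime) (hpq : p ≠ q)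

include hp hq hpq

lemma M_char : sift {p, q, p * q} =
    {n | 0 < n ∧ Even (n.factorization p) ∧ Even (n.factorization q)} :=
  Set.ext fun n => sift_char hp hq hpq n

lemma pM_char : (p * ·) '' sift {p, q, p * q} =
    {n | 0 < n ∧ Odd (n.factorization p) ∧ Even (n.factorization q)} := by
  have hfp : p.factorization p = 1 := hp.factorization_self
  have hfpq : p.factorization q = 0 := by
    rw [hp.factorization, Finsupp.single_apply, if_neg hpq]
  ext n
  simp only [Set.mem_image, Set.mem_setOf_eq]
  constructor
  · rintro ⟨m, hm, rfl⟩
    obtain ⟨hm0, hmp, hmq⟩ := (sift_char hp hq hpq m).mp hm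
    refine ⟨Nat.mul_pos hp.pos hm0, ?_, ?_⟩
    · rw [fact_mul_apply hp.ne_zero hm0.ne' p, hfp, add_comm]
      exact hmp.add_one
    · rwa [fact_mul_apply hp.ne_zero hm0.ne' q, hfpq, zero_add]
  · rintro ⟨hn, h1, h2⟩
    have hd : p ∣ n := by
      simpa using (hp.pow_dvd_iff_le_factorization hn.ne').mpr h1.pos
    obtain ⟨m, rfl⟩ := hd
    have hm0 : 0 < m := by
      rcases Nat.eq_zero_or_pos m with rfl | h
      · simp at hn
      · exact h
    refine ⟨m, (sift_char hp hq hpq m).mpr ⟨hm0, ?_, ?_⟩, rfl⟩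
    · rw [fact_mul_apply hp.ne_zero hm0.ne' p, hfp, add_comm, Nat.odd_add_one] at h1
      exact Nat.not_odd_iff_even.mp h1
    · rwa [fact_mul_apply hp.ne_zero hm0.ne' q, hfpq, zero_add] at h2

lemma qM_char : (q * ·) '' sift {p, q, p * q} =
    {n | 0 < n ∧ Even (n.factorization p) ∧ Odd (n.factorization q)} := by
  have hfq : q.factorization q = 1 := hq.factorization_self
  have hfqp : q.factorization p = 0 := by
    rw [hq.factorization, Finsupp.single_apply, if_neg hpq.symm]
  ext n
  simp only [Set.mem_image, Set.mem_setOf_eq]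
  constructor
  · rintro ⟨m, hm, rfl⟩
    obtain ⟨hm0, hmp, hmq⟩ := (sift_char hp hq hpq m).mp hm
    refine ⟨Nat.mul_pos hq.pos hm0, ?_, ?_⟩
    · rwa [fact_mul_apply hq.ne_zero hm0.ne' p, hfqp, zero_add]
    · rw [fact_mul_apply hq.ne_zero hm0.ne' q, hfq, add_comm]
      exact hmq.add_one
  · rintro ⟨hn, h1, h2⟩
    have hd : q ∣ n := by
      simpa using (hq.pow_dvd_iff_le_factorization hn.ne').mpr h2.pos
    obtain ⟨m, rfl⟩ := hd
    have hm0 : 0 < m := by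
      rcases Nat.eq_zero_or_pos m with rfl | h
      · simp at hn
      · exact h
    refine ⟨m, (sift_char hp hq hpq m).mpr ⟨hm0, ?_, ?_⟩, rfl⟩
    · rwa [fact_mul_apply hq.ne_zero hm0.ne' p, hfqp, zero_add] at h1
    · rw [fact_mul_apply hq.ne_zero hm0.ne' q, hfq, add_comm, Nat.odd_add_one] at h2
      exact Nat.not_odd_iff_even.mp h2

lemma pqM_char : (p * q * ·) '' sift {p, q, p * q} =
    {n | 0 < n ∧ Odd (n.factorization p) ∧ Odd (n.factorization q)} := by
  have hfp : p.factorization p = 1 := hp.factorization_self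
  have hfq : q.factorization q = 1 := hq.factorization_self
  have hfpq : p.factorization q = 0 := by
    rw [hp.factorization, Finsupp.single_apply, if_neg hpq]
  have hfqp : q.factorization p = 0 := by
    rw [hq.factorization, Finsupp.single_apply, if_neg hpq.symm]
  have hpq0 : p * q ≠ 0 := Nat.mul_ne_zero hp.ne_zero hq.ne_zero
  ext n
  simp only [Set.mem_image, Set.mem_setOf_eq]
  constructor
  · rintro ⟨m, hm, rfl⟩
    obtain ⟨hm0, hmp, hmq⟩ := (sift_char hp hq hpq m).mp hm
    refine ⟨Nat.mul_pos (Nat.mul_pos hp.pos hq.pos) hm0, ?_, ?_⟩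
    · rw [fact_mul_apply hpq0 hm0.ne' p, fact_mul_apply hp.ne_zero hq.ne_zero p,
        hfp, hfqp, add_zero, add_comm]
      exact hmp.add_one
    · rw [fact_mul_apply hpq0 hm0.ne' q, fact_mul_apply hp.ne_zero hq.ne_zero q,
        hfq, hfpq, zero_add, add_comm]
      exact hmq.add_one
  · rintro ⟨hn, h1, h2⟩
    have hd : p * q ∣ n := Nat.Coprime.mul_dvd_of_dvd_of_dvd
      ((Nat.coprime_primes hp hq).mpr hpq)
      (by simpa using (hp.pow_dvd_iff_le_factorization hn.ne').mpr h1.pos)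
      (by simpa using (hq.pow_dvd_iff_le_factorization hn.ne').mpr h2.pos)
    obtain ⟨m, rfl⟩ := hd
    have hm0 : 0 < m := by
      rcases Nat.eq_zero_or_pos m with rfl | h
      · simp at hn
      · exact h
    refine ⟨m, (sift_char hp hq hpq m).mpr ⟨hm0, ?_, ?_⟩, rfl⟩
    · rw [fact_mul_apply hpq0 hm0.ne' p, fact_mul_apply hp.ne_zero hq.ne_zero p,
        hfp, hfqp, add_zero, add_comm, Nat.odd_add_one] at h1
      exact Nat.not_odd_iff_even.mp h1
    · rw [fact_mul_apply hpq0 hm0.ne' q, fact_mul_apply hp.ne_zero hq.ne_zero q,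
        hfq, hfpq, zero_add, add_comm, Nat.odd_add_one] at h2
      exact Nat.not_odd_iff_even.mp h2

end main

/-- For distinct primes `p, q` and `M = sift {p, q, pq}`: the sets `M, pM, qM, pqM`
are pairwise disjoint with union all of `ℕ+`, and `M` has natural density
`1/(1 + 1/p + 1/q + 1/(pq))`. -/
theorem sift_pq_partition_density (p q : ℕ) (hp : p.Prime) (hq : q.Prime)
    (hpq : p ≠ q) :
    letI M := sift {p, q, p * q}
    Disjoint M ((p * ·) '' M) ∧ Disjoint M ((q * ·) '' M) ∧
    Disjoint M ((p * q * ·) '' M) ∧ Disjoint ((p * ·) '' M) ((q * ·) '' M) ∧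
    Disjoint ((p * ·) '' M) ((p * q * ·) '' M) ∧
    Disjoint ((q * ·) '' M) ((p * q * ·) '' M) ∧
    M ∪ (p * ·) '' M ∪ (q * ·) '' M ∪ (p * q * ·) '' M = {n | 0 < n} ∧
    hasDensity M (1 + (p : ℝ)⁻¹ + (q : ℝ)⁻¹ + ((p : ℝ) * q)⁻¹)⁻¹ := by
  rw [pM_char hp hq hpq, qM_char hp hq hpq, pqM_char hp hq hpq, M_char hp hq hpq]
  refine ⟨?_, ?_, ?_, ?_, ?_, ?_, ?_, ?_⟩
  · rw [Set.disjoint_left]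
    rintro n ⟨hn, h1, h2⟩ ⟨hn', h1', h2'⟩
    exact (Nat.not_odd_iff_even.mpr h1) h1'
  · rw [Set.disjoint_left]
    rintro n ⟨hn, h1, h2⟩ ⟨hn', h1', h2'⟩
    exact (Nat.not_odd_iff_even.mpr h2) h2'
  · rw [Set.disjoint_left]
    rintro n ⟨hn, h1, h2⟩ ⟨hn', h1', h2'⟩
    exact (Nat.not_odd_iff_even.mpr h1) h1'
  · rw [Set.disjoint_left]
    rintro n ⟨hn, h1, h2⟩ ⟨hn', h1', h2'⟩
    exact (Nat.not_odd_iff_even.mpr h1') h1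
  · rw [Set.disjoint_left]
    rintro n ⟨hn, h1, h2⟩ ⟨hn', h1', h2'⟩
    exact (Nat.not_odd_iff_even.mpr h2) h2'
  · rw [Set.disjoint_left]
    rintro n ⟨hn, h1, h2⟩ ⟨hn', h1', h2'⟩
    exact (Nat.not_odd_iff_even.mpr h1) h1'
  · ext n
    simp only [Set.mem_union, Set.mem_setOf_eq]
    constructor
    · rintro (((⟨h, _⟩ | ⟨h, _⟩) | ⟨h, _⟩) | ⟨h, _⟩) <;> exact h
    · intro hn
      rcases Nat.even_or_odd (n.factorization p) with h1 | h1 <;>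
        rcases Nat.even_or_odd (n.factorization q) with h2 | h2
      · exact Or.inl (Or.inl (Or.inl ⟨hn, h1, h2⟩))
      · exact Or.inl (Or.inr ⟨hn, h1, h2⟩)
      · exact Or.inl (Or.inl (Or.inr ⟨hn, h1, h2⟩))
      · exact Or.inr ⟨hn, h1, h2⟩
  · have hset : ∀ N : ℕ,
        ({n | 0 < n ∧ Even (n.factorization p) ∧ Even (n.factorization q)} ∩ Set.Icc 1 N)
        = ↑((Finset.Icc 1 N).filter
            (fun n => Even (n.factorization p) ∧ Even (n.factorization q))) := by
      intro N
      ext n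
      simp only [Set.mem_inter_iff, Set.mem_setOf_eq, Set.mem_Icc, Finset.coe_filter,
        Finset.mem_Icc]
      constructor
      · rintro ⟨⟨h0, h1, h2⟩, h3, h4⟩; exact ⟨⟨h3, h4⟩, h1, h2⟩
      · rintro ⟨⟨h3, h4⟩, h1, h2⟩; exact ⟨⟨h3, h1, h2⟩, h3, h4⟩
    have hfun : (fun N : ℕ =>
        ((({n | 0 < n ∧ Even (n.factorization p) ∧ Even (n.factorization q)}
          ∩ Set.Icc 1 N).ncard : ℝ)) / N)
        = fun N : ℕ => ((((Finset.Icc 1 N).filter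
            (fun n => Even (n.factorization p) ∧ Even (n.factorization q))).card : ℝ)) / N :=
      funext fun N => by rw [hset N, Set.ncard_coe_finset]
    rw [hasDensity, hfun]
    exact density_count hp hq hpq
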